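/- arXiv:2602.11774 — 5 statements merged into one kernel-verified Lean document; each statement's English description precedes it below -/
import Mathlib

section
/- Let p be a prime with p ≡ 1 (mod 4). If there exist positive integers x ≤ y ≤ z with 4/p = 1/x + 1/y + 1/z, where p does not divide x, p does not divide y, and p divides z (a Type I solution), then there exists a nonnegative integer k such that z = ((4k+3)·p² + p)/4. -/
theorem stmt_1 (p : ℕ) (hp : p.Prime) (hp4 : p % 4 = 1)
    (x y z : ℕ) (hx : 0 < x) (hxy : x ≤ y) (hyz : y ≤ z)
    (heq : (4 / p : ℚ) = 1 / x + 1 / y + 1 / z)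
    (hpx : ¬ p ∣ x) (hpy : ¬ p ∣ y) (hpz : p ∣ z) :
    ∃ k : ℕ, 4 * z = (4 * k + 3) * p ^ 2 + p := by
  have hp0 : 0 < p := hp.pos
  have hy : 0 < y := hx.trans_le hxy
  have hz : 0 < z := hy.trans_le hyz
  have hpQ : (p:ℚ) ≠ 0 := Nat.cast_ne_zero.mpr hp0.ne'
  have hxQ : (x:ℚ) ≠ 0 := Nat.cast_ne_zero.mpr hx.ne'
  have hyQ : (y:ℚ) ≠ 0 := Nat.cast_ne_zero.mpr hy.ne'
  have hzQ : (z:ℚ) ≠ 0 := Nat.cast_ne_zero.mpr hz.ne'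
  have keyQ : (4 * (x * y * z) : ℚ) = p * (y * z) + p * (x * z) + p * (x * y) := by
    field_simp at heq
    linarith [heq]
  have key : 4 * (x * y * z) = p * (y * z) + p * (x * z) + p * (x * y) := by
    exact_mod_cast keyQ
  obtain ⟨t, ht⟩ := hpz
  have ht0 : 0 < t := by
    rcases Nat.eq_zero_or_pos t with h | h
    · simp [h, ht] at hz
    · exact h
  -- cancel p
  have key2 : 4 * (x * y * t) = t * (x + y) * p + x * y := by
    have : p * (4 * (x * y * t)) = p * (t * (x + y) * p + x * y) := by
      subst ht; ring_nf at key ⊢; linarith [key]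
    exact Nat.eq_of_mul_eq_mul_left hp0 this
  have hdvd : p ∣ 4 * t - 1 := by
    have h1 : x * y * (4 * t - 1) = p * (t * (x + y)) := by
      have h4t : 1 ≤ 4 * t := by omega
      zify [h4t]
      push_cast [Nat.sub_add_cancel] at *
      nlinarith [key2]
    have : p ∣ x * y * (4 * t - 1) := ⟨t * (x + y), h1⟩
    rcases (hp.dvd_mul.mp this) with h | h
    · rcases hp.dvd_mul.mp h with h | h
      · exact absurd h hpx
      · exact absurd h hpy
    · exact h
  obtain ⟨u, hu⟩ := hdvd
  have hupt : 4 * t = p * u + 1 := by omega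
  have hu3 : u % 4 = 3 := by
    have h1 : p * u % 4 = u % 4 := by
      rw [Nat.mul_mod, hp4, one_mul]
      omega
    omega
  refine ⟨u / 4, ?_⟩
  have : 4 * (u / 4) + 3 = u := by omega
  rw [this]
  subst ht
  ring_nf
  nlinarith [hupt]
end

section
/- For every prime p with p ≡ 13 (mod 20), one has 10 ∣ (3p+1), 2 ∣ (3p+1), 4 ∣ p(3p+1), and 4/p = 10/(3p+1) + 2/(3p+1) + 4/(p(3p+1)); consequently 4/p is a sum of three unit fractions 1/((3p+1)/10) + 1/((3p+1)/2) + 1/(p(3p+1)/4). -/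
theorem stmt_7 (p : ℕ) (hp : p.Prime) (h : p % 20 = 13) :
    10 ∣ (3 * p + 1) ∧ 2 ∣ (3 * p + 1) ∧ 4 ∣ p * (3 * p + 1) ∧
    (4 / p : ℚ) = 10 / (3 * p + 1) + 2 / (3 * p + 1) + 4 / (p * (3 * p + 1)) ∧
    (4 / p : ℚ) = 1 / (((3 * p + 1) / 10 : ℕ)) + 1 / (((3 * p + 1) / 2 : ℕ))
      + 1 / ((p * (3 * p + 1) / 4 : ℕ)) := by
  have h10 : 10 ∣ (3 * p + 1) := by omega
  have h2 : 2 ∣ (3 * p + 1) := by omega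
  have h4 : 4 ∣ p * (3 * p + 1) := by
    obtain ⟨k, hk⟩ : ∃ k, p = 20 * k + 13 := ⟨p / 20, by omega⟩
    subst hk; ring_nf; omega
  have hp0 : (p : ℚ) ≠ 0 := by exact_mod_cast hp.pos.ne'
  have hq0 : ((3 * p + 1 : ℕ) : ℚ) ≠ 0 := by positivity
  have key : (4 / p : ℚ) = 10 / (3 * p + 1) + 2 / (3 * p + 1) + 4 / (p * (3 * p + 1)) := by
    field_simp
    ring
  refine ⟨h10, h2, h4, key, ?_⟩
  rw [Nat.cast_div h10 (by norm_num), Nat.cast_div h2 (by norm_num),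
    Nat.cast_div h4 (by norm_num), one_div_div, one_div_div, one_div_div]
  push_cast at key ⊢
  convert key using 2
end

section
/- For every prime p with p ≡ 5 (mod 8), one has 8 ∣ (3p+1), 4 ∣ (3p+1), 4 ∣ p(3p+1), and 4/p = 8/(3p+1) + 4/(3p+1) + 4/(p(3p+1)); consequently 4/p is a sum of three unit fractions 1/((3p+1)/8) + 1/((3p+1)/4) + 1/(p(3p+1)/4). -/
theorem stmt_9 (p : ℕ) (hp : p.Prime) (h : p % 8 = 5) :
    8 ∣ (3 * p + 1) ∧ 4 ∣ (3 * p + 1) ∧ 4 ∣ p * (3 * p + 1) ∧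
    (4 / p : ℚ) = 8 / (3 * p + 1) + 4 / (3 * p + 1) + 4 / (p * (3 * p + 1)) ∧
    (4 / p : ℚ) = 1 / (((3 * p + 1) / 8 : ℕ)) + 1 / (((3 * p + 1) / 4 : ℕ))
      + 1 / ((p * (3 * p + 1) / 4 : ℕ)) := by
  obtain ⟨k, hk⟩ : ∃ k, p = 8 * k + 5 := ⟨p / 8, by omega⟩
  subst hk
  have e1 : (3 * (8 * k + 5) + 1) / 8 = 3 * k + 2 := by omega
  have e2 : (3 * (8 * k + 5) + 1) / 4 = 6 * k + 4 := by omega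
  have e3 : (8 * k + 5) * (3 * (8 * k + 5) + 1) / 4 = (8 * k + 5) * (6 * k + 4) := by
    rw [Nat.mul_div_assoc _ (by omega : 4 ∣ 3 * (8 * k + 5) + 1), e2]
  refine ⟨by omega, by omega, ⟨(8 * k + 5) * (6 * k + 4), by ring⟩, ?_, ?_⟩ <;>
    [skip; rw [e1, e2, e3]] <;>
  · push_cast
    rw [div_add_div _ _ (by positivity) (by positivity), div_add_div _ _ (by positivity) (by positivity),
      div_eq_div_iff (by positivity) (by positivity)]
    ring
end

section
/- Let p be a prime and let x ≤ y ≤ z be positive integers with 4/p = 1/x + 1/y + 1/z, where p does not divide x, p does not divide y, and p divides z. Then z = x·y·p / gcd(x·y, x+y), and moreover 4·x·y − (x+y)·p = gcd(x·y, x+y). -/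
theorem stmt_13 (p : ℕ) (hp : p.Prime)
    (x y z : ℕ) (hx : 0 < x) (hxy : x ≤ y) (hyz : y ≤ z)
    (heq : (4 / p : ℚ) = 1 / x + 1 / y + 1 / z)
    (hpx : ¬ p ∣ x) (hpy : ¬ p ∣ y) (hpz : p ∣ z) :
    z = x * y * p / Nat.gcd (x * y) (x + y) ∧
    (4 * x * y : ℤ) - (x + y) * p = Nat.gcd (x * y) (x + y) := by
  have hy : 0 < y := lt_of_lt_of_le hx hxy
  have hz : 0 < z := lt_of_lt_of_le hy hyz
  have hp0 : 0 < p := hp.pos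
  have hxQ : (x:ℚ) ≠ 0 := Nat.cast_ne_zero.mpr hx.ne'
  have hyQ : (y:ℚ) ≠ 0 := Nat.cast_ne_zero.mpr hy.ne'
  have hzQ : (z:ℚ) ≠ 0 := Nat.cast_ne_zero.mpr hz.ne'
  have hpQ : (p:ℚ) ≠ 0 := Nat.cast_ne_zero.mpr hp0.ne'
  field_simp at heq
  have key : (4*(x*y*z) : ℤ) = ((y+x)*z + x*y)*p := by
    have h : (4*x*y*z : ℤ) = p*((y+x)*z + x*y) := by exact_mod_cast heq
    linear_combination h
  obtain ⟨m, hm⟩ := hpz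
  have hdz : ((4*x*y : ℤ) - (x+y)*p) * z = p*(x*y) := by
    linear_combination key
  have hdpos : 0 < (4*x*y : ℤ) - (x+y)*p := by
    rcases lt_trichotomy ((4*x*y : ℤ) - (x+y)*p) 0 with h | h | h
    · nlinarith [hdz, (by positivity : (0:ℤ) < (p:ℤ)*(x*y)), (by exact_mod_cast hz : (0:ℤ) < (z:ℤ))]
    · nlinarith [hdz, (by positivity : (0:ℤ) < (p:ℤ)*(x*y))]
    · exact h
  obtain ⟨D, hD⟩ : ∃ D : ℕ, (D:ℤ) = (4*x*y : ℤ) - (x+y)*p :=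
    ⟨((4*x*y : ℤ) - (x+y)*p).toNat, Int.toNat_of_nonneg hdpos.le⟩
  have hDpos : 0 < D := by exact_mod_cast hD ▸ hdpos
  have hmD : m * D = x * y := by
    have h1 : (p:ℤ) * ((m:ℤ) * D) = (p:ℤ) * (x*y) := by
      rw [hD]; push_cast [hm] at hdz ⊢; linarith [hdz]
    have h2 := mul_left_cancel₀ (by exact_mod_cast hp0.ne' : (p:ℤ) ≠ 0) h1
    exact_mod_cast h2
  have hDxy : D ∣ x * y := Dvd.intro_left m hmD
  have hmZ : (m:ℤ) * D = (x:ℤ) * y := by exact_mod_cast hmD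
  have hDxyp : D ∣ (x + y) * p := by
    have : (D:ℤ) ∣ ((x:ℤ) + y) * p := ⟨4*(m:ℤ) - 1, by linear_combination hD - 4*hmZ⟩
    exact_mod_cast this
  have hpD : ¬ p ∣ D := by
    intro h
    rcases (hp.dvd_mul.mp (h.trans hDxy)) with h' | h'
    · exact hpx h'
    · exact hpy h'
  have hDxs : D ∣ x + y :=
    (Nat.Coprime.dvd_of_dvd_mul_right ((hp.coprime_iff_not_dvd.mpr hpD).symm) hDxyp)
  have hDg : D ∣ Nat.gcd (x*y) (x+y) := Nat.dvd_gcd hDxy hDxs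
  have hgD : Nat.gcd (x*y) (x+y) ∣ D := by
    have h1 : ((Nat.gcd (x*y) (x+y) : ℕ) : ℤ) ∣ (D:ℤ) := by
      rw [hD]
      have hg1 : ((Nat.gcd (x*y) (x+y) : ℕ) : ℤ) ∣ ((x:ℤ)*y) := by
        exact_mod_cast Int.natCast_dvd_natCast.mpr (Nat.gcd_dvd_left _ _)
      have hg2 : ((Nat.gcd (x*y) (x+y) : ℕ) : ℤ) ∣ ((x:ℤ)+y) := by
        exact_mod_cast Int.natCast_dvd_natCast.mpr (Nat.gcd_dvd_right _ _)
      rw [show (4:ℤ)*x*y = 4*((x:ℤ)*y) from by ring]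
      exact dvd_sub (hg1.mul_left 4) (hg2.mul_right p)
    exact_mod_cast h1
  have hDeq : D = Nat.gcd (x*y) (x+y) := Nat.dvd_antisymm hDg hgD
  constructor
  · rw [← hDeq]
    have hmul : x * y * p = z * D := by
      calc x * y * p = p * (m * D) := by rw [hmD]; ring
      _ = z * D := by rw [hm]; ring
    rw [hmul]
    exact (Nat.mul_div_cancel z hDpos).symm
  · rw [← hDeq, hD]
end

section
/- Let p be a prime with p ≡ 1 (mod 4), and let x, y be positive integers such that 4·x·y − (x+y)·p = gcd(x·y, x+y) and such that ((x+y)·p² + gcd(x·y, x+y)·p)/4 is an integer. Then (x+y)/gcd(x·y, x+y) ≡ 3 (mod 4). -/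
theorem stmt_15 (p : ℕ) (hp : p.Prime) (hp4 : p % 4 = 1)
    (x y : ℕ) (hx : 0 < x) (hy : 0 < y)
    (h1 : (4 * x * y : ℤ) - (x + y) * p = Nat.gcd (x * y) (x + y))
    (h2 : 4 ∣ (x + y) * p ^ 2 + Nat.gcd (x * y) (x + y) * p) :
    ((x + y) / Nat.gcd (x * y) (x + y)) % 4 = 3 := by
  set g := Nat.gcd (x * y) (x + y) with hg
  have hgpos : 0 < g := Nat.gcd_pos_of_pos_right _ (by omega)
  have hN : 4 * x * y = (x + y) * p + g := by
    have : (4 * x * y : ℤ) = (x + y) * p + g := by linarith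
    exact_mod_cast this
  obtain ⟨k, hk⟩ : g ∣ x * y := Nat.gcd_dvd_left _ _
  obtain ⟨m, hm⟩ : g ∣ x + y := Nat.gcd_dvd_right _ _
  have h4k : 4 * k = m * p + 1 := by
    have : g * (4 * k) = g * (m * p + 1) := by
      calc g * (4 * k) = 4 * (x * y) := by rw [hk]; ring
        _ = (x + y) * p + g := by linarith
        _ = g * (m * p + 1) := by rw [hm]; ring
    exact Nat.eq_of_mul_eq_mul_left hgpos this
  have hmod : m * p % 4 = 3 := by omega
  have := Nat.mul_mod m p 4
  rw [hp4] at this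
  rw [hm, Nat.mul_div_cancel_left _ hgpos]
  omega
end
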